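/- For the partition algebra: ∑_{m=0}^k (∑_t S(k,t)·C(t,m))^2 · m! = B(2k), where S denotes Stirling numbers of the second kind, C binomial coefficients, and B(2k) the Bell number. -/

import Mathlib

/-- Stirling numbers of the second kind, via the standard recurrence. -/
def stirling2 : ℕ → ℕ → ℕ
  | 0, 0 => 1
  | 0, _ + 1 => 0
  | _ + 1, 0 => 0
  | n + 1, t + 1 => (t + 1) * stirling2 n (t + 1) + stirling2 n t

/-- `P` is a set partition of `Fin n`. -/
def IsSetPartition {n : ℕ} (P : Finset (Finset (Fin n))) : Prop :=
  (∀ B ∈ P, B.Nonempty) ∧ ∀ x : Fin n, ∃! B, B ∈ P ∧ x ∈ B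

lemma stirling2_zero_zero : stirling2 0 0 = 1 := rfl
lemma stirling2_zero_succ (t : ℕ) : stirling2 0 (t+1) = 0 := rfl
lemma stirling2_succ_zero (n : ℕ) : stirling2 (n+1) 0 = 0 := rfl
lemma stirling2_succ_succ (n t : ℕ) :
    stirling2 (n+1) (t+1) = (t + 1) * stirling2 n (t + 1) + stirling2 n t := rfl

set_option linter.unusedSectionVars false

open Finset

section General
variable {α : Type*} [DecidableEq α] [Fintype α]

/-- partition of a finset `s`. -/
def IsPart (s : Finset α) (P : Finset (Finset α)) : Prop :=
  (∀ B ∈ P, B ⊆ s) ∧ (∀ B ∈ P, B.Nonempty) ∧ ∀ x ∈ s, ∃! B, B ∈ P ∧ x ∈ B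

open Classical in
noncomputable def parts (s : Finset α) : Finset (Finset (Finset α)) :=
  univ.filter (fun P => IsPart s P)

lemma mem_parts {s : Finset α} {P : Finset (Finset α)} : P ∈ parts s ↔ IsPart s P := by
  simp [parts]

lemma IsPart.block_eq {s : Finset α} {P : Finset (Finset α)} (h : IsPart s P)
    {B C : Finset α} {x : α} (hB : B ∈ P) (hC : C ∈ P) (hxB : x ∈ B) (hxC : x ∈ C) :
    B = C := by
  have hx : x ∈ s := h.1 B hB hxB
  obtain ⟨D, _, hu⟩ := h.2.2 x hx
  rw [hu B ⟨hB, hxB⟩, hu C ⟨hC, hxC⟩]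

lemma IsPart.biUnion_eq {s : Finset α} {P : Finset (Finset α)} (h : IsPart s P) :
    P.biUnion id = s := by
  apply Finset.Subset.antisymm
  · intro x hx
    simp only [Finset.mem_biUnion, id] at hx
    obtain ⟨B, hB, hxB⟩ := hx
    exact h.1 B hB hxB
  · intro x hx
    obtain ⟨B, ⟨hB, hxB⟩, _⟩ := h.2.2 x hx
    simp only [Finset.mem_biUnion, id]
    exact ⟨B, hB, hxB⟩

lemma IsPart.card_le {s : Finset α} {P : Finset (Finset α)} (h : IsPart s P) :
    P.card ≤ s.card := by
  have h1 : P.card = ∑ B ∈ P, 1 := by simp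
  have h2 : s.card = ∑ B ∈ P, B.card := by
    rw [← h.biUnion_eq, Finset.card_biUnion]
    · simp
    intro B hB C hC hne
    show Disjoint B C; rw [Finset.disjoint_left]
    intro x hxB hxC
    exact hne (h.block_eq hB hC hxB hxC)
  rw [h1, h2]
  apply Finset.sum_le_sum
  intro B hB
  exact (h.2.1 B hB).card_pos


open Classical in
noncomputable def blockOf (P : Finset (Finset α)) (x : α) : Finset α :=
  if h : ∃! B, B ∈ P ∧ x ∈ B then P.choose (fun B => x ∈ B) h else ∅

lemma blockOf_mem {s : Finset α} {P : Finset (Finset α)} (h : IsPart s P) {x : α} (hx : x ∈ s) :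
    blockOf P x ∈ P ∧ x ∈ blockOf P x := by
  classical
  have h' := h.2.2 x hx
  rw [blockOf, dif_pos h']
  exact ⟨Finset.choose_mem _ _ _, Finset.choose_property (fun B => x ∈ B) P h'⟩

lemma blockOf_eq {s : Finset α} {P : Finset (Finset α)} (h : IsPart s P) {x : α} (hx : x ∈ s)
    {B : Finset α} (hB : B ∈ P) (hxB : x ∈ B) : B = blockOf P x :=
  h.block_eq hB (blockOf_mem h hx).1 hxB (blockOf_mem h hx).2

/-- Splitting off a new element `a` whose block is not a singleton. -/
lemma isPart_split {s : Finset α} {P : Finset (Finset α)} (ha : a ∉ s)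
    (h : IsPart (insert a s) P) (hs : {a} ∉ P) :
    IsPart s (insert ((blockOf P a).erase a) (P.erase (blockOf P a))) := by
  have hmem := blockOf_mem h (Finset.mem_insert_self a s)
  set B := blockOf P a with hBdef
  have hBne : B ≠ {a} := fun hEq => hs (hEq ▸ hmem.1)
  have hBsub : B ⊆ insert a s := h.1 B hmem.1
  -- every other block does not contain a
  have hnA : ∀ C ∈ P, C ≠ B → a ∉ C := by
    intro C hC hne haC
    exact hne (h.block_eq hC hmem.1 haC hmem.2)
  have hBea : (B.erase a).Nonempty := by
    rw [Ne, Finset.eq_singleton_iff_unique_mem] at hBne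
    push_neg at hBne
    obtain ⟨y, hy, hyne⟩ := hBne hmem.2
    exact ⟨y, Finset.mem_erase.mpr ⟨hyne, hy⟩⟩
  refine ⟨?_, ?_, ?_⟩
  · intro C hC
    rcases Finset.mem_insert.mp hC with rfl | hC'
    · intro y hy
      have := hBsub (Finset.mem_of_mem_erase hy)
      rcases Finset.mem_insert.mp this with rfl | h'
      · exact absurd rfl (Finset.ne_of_mem_erase hy)
      · exact h'
    · intro y hy
      have hCP := Finset.mem_of_mem_erase hC'
      have := h.1 C hCP hy
      rcases Finset.mem_insert.mp this with rfl | h'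
      · exact absurd hy (hnA C hCP (Finset.ne_of_mem_erase hC'))
      · exact h'
  · intro C hC
    rcases Finset.mem_insert.mp hC with rfl | hC'
    · exact hBea
    · exact h.2.1 C (Finset.mem_of_mem_erase hC')
  · intro x hx
    have hxs : x ∈ insert a s := Finset.mem_insert_of_mem hx
    have hxa : x ≠ a := fun hEq => ha (hEq ▸ hx)
    obtain ⟨C, ⟨hCP, hxC⟩, hu⟩ := h.2.2 x hxs
    by_cases hCB : C = B
    · refine ⟨B.erase a, ⟨Finset.mem_insert_self _ _, Finset.mem_erase.mpr ⟨hxa, hCB ▸ hxC⟩⟩, ?_⟩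
      rintro D ⟨hD, hxD⟩
      rcases Finset.mem_insert.mp hD with rfl | hD'
      · rfl
      · exfalso
        have hDP := Finset.mem_of_mem_erase hD'
        have hDC : D = C := hu D ⟨hDP, hxD⟩
        exact Finset.ne_of_mem_erase hD' (hDC.trans hCB)
    · refine ⟨C, ⟨Finset.mem_insert_of_mem (Finset.mem_erase.mpr ⟨hCB, hCP⟩), hxC⟩, ?_⟩
      rintro D ⟨hD, hxD⟩
      rcases Finset.mem_insert.mp hD with rfl | hD'
      · exfalso
        have hxB : x ∈ B := Finset.mem_of_mem_erase hxD
        exact hCB (hu B ⟨hmem.1, hxB⟩ ▸ rfl)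
      · exact hu D ⟨Finset.mem_of_mem_erase hD', hxD⟩


lemma isPart_merge {a : α} {s : Finset α} {Q : Finset (Finset α)} {C : Finset α} (ha : a ∉ s)
    (h : IsPart s Q) (hC : C ∈ Q) :
    IsPart (insert a s) (insert (insert a C) (Q.erase C)) := by
  have hnoA : ∀ D ∈ Q, a ∉ D := fun D hD haD => ha (h.1 D hD haD)
  refine ⟨?_, ?_, ?_⟩
  · intro D hD
    rcases Finset.mem_insert.mp hD with rfl | hD'
    · exact Finset.insert_subset_insert a (h.1 C hC)
    · exact (h.1 D (Finset.mem_of_mem_erase hD')).trans (Finset.subset_insert a s)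
  · intro D hD
    rcases Finset.mem_insert.mp hD with rfl | hD'
    · exact ⟨a, Finset.mem_insert_self a C⟩
    · exact h.2.1 D (Finset.mem_of_mem_erase hD')
  · intro x hx
    rcases Finset.mem_insert.mp hx with rfl | hx'
    · refine ⟨insert x C, ⟨Finset.mem_insert_self _ _, Finset.mem_insert_self x C⟩, ?_⟩
      rintro D ⟨hD, hxD⟩
      rcases Finset.mem_insert.mp hD with rfl | hD'
      · rfl
      · exact absurd hxD (hnoA D (Finset.mem_of_mem_erase hD'))
    · obtain ⟨D, ⟨hDQ, hxD⟩, hu⟩ := h.2.2 x hx'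
      have hxa : x ≠ a := fun hEq => ha (hEq ▸ hx')
      by_cases hDC : D = C
      · refine ⟨insert a C, ⟨Finset.mem_insert_self _ _,
          Finset.mem_insert_of_mem (hDC ▸ hxD)⟩, ?_⟩
        rintro E ⟨hE, hxE⟩
        rcases Finset.mem_insert.mp hE with rfl | hE'
        · rfl
        · exfalso
          have hEQ := Finset.mem_of_mem_erase hE'
          have : E = D := hu E ⟨hEQ, hxE⟩
          exact Finset.ne_of_mem_erase hE' (this.trans hDC)
      · refine ⟨D, ⟨Finset.mem_insert_of_mem (Finset.mem_erase.mpr ⟨hDC, hDQ⟩), hxD⟩, ?_⟩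
        rintro E ⟨hE, hxE⟩
        rcases Finset.mem_insert.mp hE with rfl | hE'
        · exfalso
          rcases Finset.mem_insert.mp hxE with rfl | hxC
          · exact hxa rfl
          · exact hDC (hu C ⟨hC, hxC⟩).symm
        · exact hu E ⟨Finset.mem_of_mem_erase hE', hxE⟩

lemma isPart_erase_singleton {a : α} {s : Finset α} {P : Finset (Finset α)} (ha : a ∉ s)
    (h : IsPart (insert a s) P) (hs : {a} ∈ P) : IsPart s (P.erase {a}) := by
  refine ⟨?_, fun B hB => h.2.1 B (Finset.mem_of_mem_erase hB), ?_⟩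
  · intro B hB y hy
    have hBP := Finset.mem_of_mem_erase hB
    have := h.1 B hBP hy
    rcases Finset.mem_insert.mp this with rfl | h'
    · exfalso
      exact Finset.ne_of_mem_erase hB (h.block_eq hBP hs hy (Finset.mem_singleton_self _))
    · exact h'
  · intro x hx
    have hxa : x ≠ a := fun hEq => ha (hEq ▸ hx)
    obtain ⟨B, ⟨hBP, hxB⟩, hu⟩ := h.2.2 x (Finset.mem_insert_of_mem hx)
    have hBne : B ≠ {a} := by
      rintro rfl
      exact hxa (Finset.mem_singleton.mp hxB)
    exact ⟨B, ⟨Finset.mem_erase.mpr ⟨hBne, hBP⟩, hxB⟩,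
      fun D hD => hu D ⟨Finset.mem_of_mem_erase hD.1, hD.2⟩⟩

lemma isPart_insert_singleton {a : α} {s : Finset α} {Q : Finset (Finset α)} (ha : a ∉ s)
    (h : IsPart s Q) : IsPart (insert a s) (insert {a} Q) := by
  have hnoA : ∀ D ∈ Q, a ∉ D := fun D hD haD => ha (h.1 D hD haD)
  refine ⟨?_, ?_, ?_⟩
  · intro B hB
    rcases Finset.mem_insert.mp hB with rfl | hB'
    · simp
    · exact (h.1 B hB').trans (Finset.subset_insert a s)
  · intro B hB
    rcases Finset.mem_insert.mp hB with rfl | hB'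
    · simp
    · exact h.2.1 B hB'
  · intro x hx
    rcases Finset.mem_insert.mp hx with rfl | hx'
    · refine ⟨{x}, ⟨Finset.mem_insert_self _ _, Finset.mem_singleton_self x⟩, ?_⟩
      rintro D ⟨hD, hxD⟩
      rcases Finset.mem_insert.mp hD with rfl | hD'
      · rfl
      · exact absurd hxD (hnoA D hD')
    · obtain ⟨B, ⟨hBQ, hxB⟩, hu⟩ := h.2.2 x hx'
      have hxa : x ≠ a := fun hEq => ha (hEq ▸ hx')
      refine ⟨B, ⟨Finset.mem_insert_of_mem hBQ, hxB⟩, ?_⟩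
      rintro D ⟨hD, hxD⟩
      rcases Finset.mem_insert.mp hD with rfl | hD'
      · exact absurd (Finset.mem_singleton.mp hxD) hxa
      · exact hu D ⟨hD', hxD⟩

lemma singleton_not_mem {a : α} {s : Finset α} {Q : Finset (Finset α)} (ha : a ∉ s)
    (h : IsPart s Q) : {a} ∉ Q := fun hmem => ha (h.1 _ hmem (Finset.mem_singleton_self a))


theorem card_parts_filter (s : Finset α) :
    ∀ t, ((parts s).filter (fun P => P.card = t)).card = stirling2 s.card t := by
  classical
  induction s using Finset.induction_on with
  | empty =>
    intro t
    have hp : parts (∅ : Finset α) = {∅} := by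
      ext P
      rw [mem_parts]
      simp only [Finset.mem_singleton]
      constructor
      · rintro ⟨h1, h2, _⟩
        by_contra hne
        obtain ⟨B, hB⟩ := Finset.nonempty_iff_ne_empty.mpr hne
        obtain ⟨x, hx⟩ := h2 B hB
        exact absurd (h1 B hB hx) (Finset.notMem_empty x)
      · rintro rfl
        exact ⟨by simp, by simp, by simp⟩
    rw [hp]
    cases t with
    | zero => simp [Finset.filter_singleton, stirling2_zero_zero]
    | succ t => simp [Finset.filter_singleton, stirling2_zero_succ]
  | @insert a s ha ih =>
    intro t
    rw [Finset.card_insert_of_notMem ha]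
    cases t with
    | zero =>
      rw [stirling2_succ_zero, Finset.card_eq_zero, Finset.filter_eq_empty_iff]
      intro P hP
      rw [mem_parts] at hP
      obtain ⟨B, ⟨hBP, _⟩, _⟩ := hP.2.2 a (Finset.mem_insert_self a s)
      intro h0
      rw [Finset.card_eq_zero] at h0
      exact absurd hBP (h0 ▸ Finset.notMem_empty B)
    | succ t =>
      rw [stirling2_succ_succ,
        Nat.add_comm ((t + 1) * stirling2 s.card (t + 1)) (stirling2 s.card t)]
      rw [← Finset.card_filter_add_card_filter_not
        (s := (parts (insert a s)).filter (fun P => P.card = t + 1))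
        (p := fun P => ({a} : Finset α) ∈ P)]
      congr 1
      -- singleton case: count = stirling2 s.card t
      · rw [← ih t]
        refine Finset.card_bij' (fun P _ => P.erase {a}) (fun Q _ => insert {a} Q) ?_ ?_ ?_ ?_
        · intro P hP
          rw [Finset.mem_filter] at hP
          obtain ⟨hP1, hsing⟩ := hP
          rw [Finset.mem_filter, mem_parts] at hP1
          obtain ⟨hpart, hcard⟩ := hP1
          rw [Finset.mem_filter, mem_parts]
          exact ⟨isPart_erase_singleton ha hpart hsing,
            by rw [Finset.card_erase_of_mem hsing, hcard]; omega⟩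
          
        · intro Q hQ
          rw [Finset.mem_filter, mem_parts] at hQ
          obtain ⟨hpart, hcard⟩ := hQ
          have hns := singleton_not_mem ha hpart
          rw [Finset.mem_filter, Finset.mem_filter, mem_parts]
          exact ⟨⟨isPart_insert_singleton ha hpart,
            by rw [Finset.card_insert_of_notMem hns, hcard]⟩, Finset.mem_insert_self _ _⟩
        · intro P hP
          rw [Finset.mem_filter] at hP
          exact Finset.insert_erase hP.2
        · intro Q hQ
          rw [Finset.mem_filter, mem_parts] at hQ
          exact Finset.erase_insert (singleton_not_mem ha hQ.1)
      -- non-singleton case: count = (t+1) * stirling2 s.card (t+1)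
      · have hbij : (((parts (insert a s)).filter (fun P => P.card = t + 1)).filter
              (fun P => ¬ ({a} : Finset α) ∈ P)).card
            = (((parts s).filter (fun Q => Q.card = t + 1)).sigma (fun Q => Q)).card := by
          refine Finset.card_bij'
            (fun P _ => ⟨insert ((blockOf P a).erase a) (P.erase (blockOf P a)),
              (blockOf P a).erase a⟩)
            (fun Z _ => insert (insert a Z.2) (Z.1.erase Z.2)) ?_ ?_ ?_ ?_
          · -- i maps in
            intro P hP
            rw [Finset.mem_filter] at hP
            obtain ⟨hP1, hsing⟩ := hP
            rw [Finset.mem_filter, mem_parts] at hP1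
            obtain ⟨hpart, hcard⟩ := hP1
            have hmem := blockOf_mem hpart (Finset.mem_insert_self a s)
            have hQ := isPart_split ha hpart hsing
            rw [Finset.mem_sigma, Finset.mem_filter, mem_parts]
            have hnot : (blockOf P a).erase a ∉ P.erase (blockOf P a) := by
              intro hmem'
              have h1 := Finset.mem_of_mem_erase hmem'
              have h2 := Finset.ne_of_mem_erase hmem'
              obtain ⟨y, hy⟩ := hQ.2.1 _ (Finset.mem_insert_self _ _)
              exact h2 (hpart.block_eq h1 hmem.1 hy (Finset.mem_of_mem_erase hy))
            refine ⟨⟨hQ, ?_⟩, Finset.mem_insert_self _ _⟩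
            rw [Finset.card_insert_of_notMem hnot,
              Finset.card_erase_of_mem hmem.1, hcard]
            omega
          · -- j maps in
            rintro ⟨Q, C⟩ hZ
            rw [Finset.mem_sigma, Finset.mem_filter, mem_parts] at hZ
            obtain ⟨⟨hpart, hcard⟩, hCQ⟩ := hZ
            rw [Finset.mem_filter, Finset.mem_filter, mem_parts]
            have hR := isPart_merge ha hpart hCQ
            have hnoA : ∀ D ∈ Q, a ∉ D := fun D hD haD => ha (hpart.1 D hD haD)
            have hiC : insert a C ∉ Q.erase C := fun hmem =>
              hnoA _ (Finset.mem_of_mem_erase hmem) (Finset.mem_insert_self a C)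
            refine ⟨⟨hR, ?_⟩, ?_⟩
            · rw [Finset.card_insert_of_notMem hiC, Finset.card_erase_of_mem hCQ, hcard]
              omega
            · intro hmem
              rcases Finset.mem_insert.mp hmem with hEq | hmem'
              · obtain ⟨y, hy⟩ := hpart.2.1 C hCQ
                have hya : y ≠ a := fun h' => hnoA C hCQ (h' ▸ hy)
                have : y ∈ ({a} : Finset α) := hEq ▸ Finset.mem_insert_of_mem hy
                exact hya (Finset.mem_singleton.mp this)
              · exact ha (hpart.1 _ (Finset.mem_of_mem_erase hmem')
                  (Finset.mem_singleton_self a))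
          · -- left inverse
            intro P hP
            rw [Finset.mem_filter] at hP
            obtain ⟨hP1, hsing⟩ := hP
            rw [Finset.mem_filter, mem_parts] at hP1
            obtain ⟨hpart, hcard⟩ := hP1
            have hmem := blockOf_mem hpart (Finset.mem_insert_self a s)
            set B := blockOf P a with hB
            have h1 : insert a (B.erase a) = B := Finset.insert_erase hmem.2
            have hnot : B.erase a ∉ P.erase B := by
              intro hmem'
              have hp1 := Finset.mem_of_mem_erase hmem'
              have hp2 := Finset.ne_of_mem_erase hmem'
              have hBne : B ≠ {a} := fun hEq => hsing (hEq ▸ hmem.1)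
              rw [Ne, Finset.eq_singleton_iff_unique_mem] at hBne
              push_neg at hBne
              obtain ⟨y, hy, hyne⟩ := hBne hmem.2
              exact hp2 (hpart.block_eq hp1 hmem.1 (Finset.mem_erase.mpr ⟨hyne, hy⟩) hy)
            show insert (insert a (B.erase a)) ((insert (B.erase a) (P.erase B)).erase
              (B.erase a)) = P
            rw [h1, Finset.erase_insert hnot, Finset.insert_erase hmem.1]
          · -- right inverse
            rintro ⟨Q, C⟩ hZ
            rw [Finset.mem_sigma, Finset.mem_filter, mem_parts] at hZ
            obtain ⟨⟨hpart, hcard⟩, hCQ⟩ := hZ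
            have hnoA : ∀ D ∈ Q, a ∉ D := fun D hD haD => ha (hpart.1 D hD haD)
            have hiC : insert a C ∉ Q.erase C := fun hmem =>
              hnoA _ (Finset.mem_of_mem_erase hmem) (Finset.mem_insert_self a C)
            have hblk : blockOf (insert (insert a C) (Q.erase C)) a = insert a C :=
              (blockOf_eq (isPart_merge ha hpart hCQ) (Finset.mem_insert_self a s)
                (Finset.mem_insert_self _ _) (Finset.mem_insert_self a C)).symm
            have haC : a ∉ C := hnoA C hCQ
            show (⟨insert ((blockOf (insert (insert a C) (Q.erase C)) a).erase a)
                ((insert (insert a C) (Q.erase C)).erase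
                  (blockOf (insert (insert a C) (Q.erase C)) a)),
                (blockOf (insert (insert a C) (Q.erase C)) a).erase a⟩ :
                (_ : Finset (Finset α)) × Finset α) = ⟨Q, C⟩
            rw [hblk, Finset.erase_insert haC, Finset.erase_insert hiC,
              Finset.insert_erase hCQ]
        rw [hbij, Finset.card_sigma,
          Finset.sum_congr rfl (fun Q hQ => (Finset.mem_filter.mp hQ).2),
          Finset.sum_const, ih (t+1), smul_eq_mul, Nat.mul_comm]


open Classical in
noncomputable def marked (s : Finset α) : Finset (Finset (Finset α) × Finset (Finset α)) :=
  univ.filter (fun q => IsPart s q.1 ∧ q.2 ⊆ q.1)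

lemma mem_marked {s : Finset α} {q : Finset (Finset α) × Finset (Finset α)} :
    q ∈ marked s ↔ IsPart s q.1 ∧ q.2 ⊆ q.1 := by simp [marked]

theorem card_marked (s : Finset α) (m : ℕ) :
    ((marked s).filter (fun q => q.2.card = m)).card
      = ∑ t ∈ Finset.range (s.card + 1), stirling2 s.card t * t.choose m := by
  classical
  rw [Finset.card_eq_sum_card_fiberwise (f := fun q => q.1.card)
    (t := Finset.range (s.card + 1)) ?memb]
  case memb =>
    intro q hq
    rw [Finset.mem_coe, Finset.mem_filter, mem_marked] at hq
    rw [Finset.mem_coe, Finset.mem_range, Nat.lt_succ_iff]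
    exact hq.1.1.card_le
  apply Finset.sum_congr rfl
  intro t _
  have hbij : ((((marked s).filter (fun q => q.2.card = m)).filter
        (fun q => q.1.card = t))).card
      = (((parts s).filter (fun P => P.card = t)).sigma (fun P => P.powersetCard m)).card := by
    refine Finset.card_bij' (fun q _ => ⟨q.1, q.2⟩) (fun Z _ => (Z.1, Z.2)) ?_ ?_ ?_ ?_
    · intro q hq
      rw [Finset.mem_filter, Finset.mem_filter, mem_marked] at hq
      rw [Finset.mem_sigma, Finset.mem_filter, mem_parts, Finset.mem_powersetCard]
      exact ⟨⟨hq.1.1.1, hq.2⟩, hq.1.1.2, hq.1.2⟩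
    · rintro ⟨P, D⟩ hZ
      rw [Finset.mem_sigma, Finset.mem_filter, mem_parts, Finset.mem_powersetCard] at hZ
      rw [Finset.mem_filter, Finset.mem_filter, mem_marked]
      exact ⟨⟨⟨hZ.1.1, hZ.2.1⟩, hZ.2.2⟩, hZ.1.2⟩
    · intro q _; rfl
    · rintro ⟨P, D⟩ _; rfl
  rw [hbij, Finset.card_sigma]
  rw [Finset.sum_congr rfl (fun P hP => by
    rw [Finset.card_powersetCard, (Finset.mem_filter.mp hP).2])]
  rw [Finset.sum_const, smul_eq_mul, card_parts_filter s t]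

section Match
variable {β : Type*} {γ : Type*} [DecidableEq β] [DecidableEq γ] [Fintype β] [Fintype γ]

def IsMatching (u : Finset β) (v : Finset γ) (M : Finset (β × γ)) : Prop :=
  (∀ p ∈ M, p.1 ∈ u ∧ p.2 ∈ v) ∧ (∀ x ∈ u, ∃! p, p ∈ M ∧ p.1 = x) ∧
    (∀ y ∈ v, ∃! p, p ∈ M ∧ p.2 = y)

open Classical in
noncomputable def matchings (u : Finset β) (v : Finset γ) : Finset (Finset (β × γ)) :=
  univ.filter (fun M => IsMatching u v M)

lemma mem_matchings {u : Finset β} {v : Finset γ} {M : Finset (β × γ)} :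
    M ∈ matchings u v ↔ IsMatching u v M := by simp [matchings]

open Classical in
noncomputable def partnerOf [Nonempty γ] (M : Finset (β × γ)) (x : β) : γ :=
  if h : ∃! p, p ∈ M ∧ p.1 = x then (M.choose (fun p => p.1 = x) h).2
  else Classical.arbitrary γ

lemma partnerOf_mem [Nonempty γ] {M : Finset (β × γ)} {x : β}
    (h : ∃! p, p ∈ M ∧ p.1 = x) : (x, partnerOf M x) ∈ M := by
  classical
  rw [partnerOf, dif_pos h]
  have h1 := M.choose_mem (fun p => p.1 = x) h
  have h2 := M.choose_property (fun p => p.1 = x) h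
  have : (x, (M.choose (fun p => p.1 = x) h).2) = M.choose (fun p => p.1 = x) h := by
    conv_rhs => rw [← Prod.mk.eta (p := M.choose (fun p => p.1 = x) h)]
    rw [h2]
  rw [this]
  exact h1

lemma partnerOf_eq [Nonempty γ] {M : Finset (β × γ)} {x : β} {b : γ}
    (h : ∃! p, p ∈ M ∧ p.1 = x) (hmem : (x, b) ∈ M) : b = partnerOf M x := by
  have h1 := h.unique ⟨hmem, rfl⟩ ⟨partnerOf_mem h, rfl⟩
  exact congrArg Prod.snd h1


theorem card_matchings [Nonempty γ] (u : Finset β) :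
    ∀ v : Finset γ, u.card = v.card → (matchings u v).card = u.card.factorial := by
  classical
  induction u using Finset.induction_on with
  | empty =>
    intro v hv
    have hv0 : v = ∅ := Finset.card_eq_zero.mp hv.symm
    subst hv0
    have : matchings (∅ : Finset β) (∅ : Finset γ) = {∅} := by
      ext M
      rw [mem_matchings]
      simp only [Finset.mem_singleton]
      constructor
      · rintro ⟨h1, -, -⟩
        rw [Finset.eq_empty_iff_forall_notMem]
        intro p hp
        exact Finset.notMem_empty _ ((h1 p hp).1)
      · rintro rfl
        exact ⟨by simp, by simp, by simp⟩
    rw [this]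
    simp
  | @insert a u ha ih =>
    intro v hv
    rw [Finset.card_insert_of_notMem ha] at hv ⊢
    have hbij : (matchings (insert a u) v).card
        = (v.sigma (fun b => matchings u (v.erase b))).card := by
      refine Finset.card_bij'
        (fun M _ => ⟨partnerOf M a, M.erase (a, partnerOf M a)⟩)
        (fun Z _ => insert (a, Z.1) Z.2) ?_ ?_ ?_ ?_
      · -- forward membership
        intro M hM
        rw [mem_matchings] at hM
        obtain ⟨h1, h2, h3⟩ := hM
        have hua : ∃! p, p ∈ M ∧ p.1 = a := h2 a (Finset.mem_insert_self a u)
        have hab : (a, partnerOf M a) ∈ M := partnerOf_mem hua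
        set b := partnerOf M a with hb
        have hbv : b ∈ v := (h1 _ hab).2
        rw [Finset.mem_sigma, mem_matchings]
        refine ⟨hbv, ?_, ?_, ?_⟩
        · rintro p hp
          have hpM := Finset.mem_of_mem_erase hp
          have hpne := Finset.ne_of_mem_erase hp
          have hp1 : p.1 ∈ u := by
            rcases Finset.mem_insert.mp (h1 p hpM).1 with hEq | h'
            · exfalso
              apply hpne
              have := hua.unique ⟨hpM, hEq⟩ ⟨hab, rfl⟩
              exact this
            · exact h'
          have hp2 : p.2 ∈ v.erase b := by
            refine Finset.mem_erase.mpr ⟨?_, (h1 p hpM).2⟩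
            intro hEq
            apply hpne
            exact (h3 b hbv).unique ⟨hpM, hEq⟩ ⟨hab, rfl⟩
          exact ⟨hp1, hp2⟩
        · intro x hx
          obtain ⟨p, ⟨hpM, hpx⟩, hu'⟩ := h2 x (Finset.mem_insert_of_mem hx)
          have hpne : p ≠ (a, b) := by
            intro hEq
            rw [hEq] at hpx
            simp only [] at hpx
            exact ha (by rw [show a = x from hpx]; exact hx)
          refine ⟨p, ⟨Finset.mem_erase.mpr ⟨hpne, hpM⟩, hpx⟩, ?_⟩
          rintro q ⟨hq, hqx⟩
          exact hu' q ⟨Finset.mem_of_mem_erase hq, hqx⟩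
        · intro y hy
          have hyv := Finset.mem_of_mem_erase hy
          obtain ⟨p, ⟨hpM, hpy⟩, hu'⟩ := h3 y hyv
          have hpne : p ≠ (a, b) := by
            intro hEq
            apply Finset.ne_of_mem_erase hy
            rw [← hpy, hEq]
          refine ⟨p, ⟨Finset.mem_erase.mpr ⟨hpne, hpM⟩, hpy⟩, ?_⟩
          rintro q ⟨hq, hqy⟩
          exact hu' q ⟨Finset.mem_of_mem_erase hq, hqy⟩
      · -- backward membership
        rintro ⟨b, N⟩ hZ
        rw [Finset.mem_sigma, mem_matchings] at hZ
        obtain ⟨hbv, h1, h2, h3⟩ := hZ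
        rw [mem_matchings]
        refine ⟨?_, ?_, ?_⟩
        · rintro p hp
          rcases Finset.mem_insert.mp hp with rfl | hp'
          · exact ⟨Finset.mem_insert_self a u, hbv⟩
          · exact ⟨Finset.mem_insert_of_mem (h1 p hp').1,
              Finset.mem_of_mem_erase (h1 p hp').2⟩
        · intro x hx
          rcases Finset.mem_insert.mp hx with rfl | hx'
          · refine ⟨(x, b), ⟨Finset.mem_insert_self _ _, rfl⟩, ?_⟩
            rintro q ⟨hq, hqx⟩
            rcases Finset.mem_insert.mp hq with rfl | hq'
            · rfl
            · exact absurd (hqx ▸ (h1 q hq').1) ha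
          · obtain ⟨p, ⟨hpN, hpx⟩, hu'⟩ := h2 x hx'
            refine ⟨p, ⟨Finset.mem_insert_of_mem hpN, hpx⟩, ?_⟩
            rintro q ⟨hq, hqx⟩
            rcases Finset.mem_insert.mp hq with rfl | hq'
            · exact absurd (hqx ▸ hx') (by simpa using ha)
            · exact hu' q ⟨hq', hqx⟩
        · intro y hy
          by_cases hyb : y = b
          · subst hyb
            refine ⟨(a, y), ⟨Finset.mem_insert_self _ _, rfl⟩, ?_⟩
            rintro q ⟨hq, hqy⟩
            rcases Finset.mem_insert.mp hq with rfl | hq'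
            · rfl
            · exact absurd hqy (Finset.ne_of_mem_erase ((h1 q hq').2))
          · obtain ⟨p, ⟨hpN, hpy⟩, hu'⟩ := h3 y (Finset.mem_erase.mpr ⟨hyb, hy⟩)
            refine ⟨p, ⟨Finset.mem_insert_of_mem hpN, hpy⟩, ?_⟩
            rintro q ⟨hq, hqy⟩
            rcases Finset.mem_insert.mp hq with rfl | hq'
            · exact absurd hqy.symm hyb
            · exact hu' q ⟨hq', hqy⟩
      · -- left inverse
        intro M hM
        rw [mem_matchings] at hM
        have hua : ∃! p, p ∈ M ∧ p.1 = a := hM.2.1 a (Finset.mem_insert_self a u)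
        exact Finset.insert_erase (partnerOf_mem hua)
      · -- right inverse
        rintro ⟨b, N⟩ hZ
        rw [Finset.mem_sigma, mem_matchings] at hZ
        obtain ⟨hbv, h1, h2, h3⟩ := hZ
        have habN : (a, b) ∉ N := fun hmem => ha ((h1 _ hmem).1)
        have huniq : ∃! p, p ∈ insert (a, b) N ∧ p.1 = a := by
          refine ⟨(a, b), ⟨Finset.mem_insert_self _ _, rfl⟩, ?_⟩
          rintro q ⟨hq, hqa⟩
          rcases Finset.mem_insert.mp hq with rfl | hq'
          · rfl
          · exact absurd (hqa ▸ (h1 q hq').1) ha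
        have hpart : partnerOf (insert (a, b) N) a = b :=
          (partnerOf_eq huniq (Finset.mem_insert_self _ _)).symm
        show (⟨partnerOf (insert (a, b) N) a,
          (insert (a, b) N).erase (a, partnerOf (insert (a, b) N) a)⟩ :
          (_ : γ) × Finset (β × γ)) = ⟨b, N⟩
        rw [hpart, Finset.erase_insert habN]
    rw [hbij, Finset.card_sigma]
    have hstep : ∀ b ∈ v, (matchings u (v.erase b)).card = u.card.factorial := by
      intro b hb
      exact ih (v.erase b) (by rw [Finset.card_erase_of_mem hb]; omega)
    rw [Finset.sum_congr rfl hstep, Finset.sum_const, smul_eq_mul, ← hv,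
      Nat.factorial_succ]

end Match

section Main

variable {s₁ s₂ : Finset α}

/-- restriction of a partition to `s`. -/
def restr (s : Finset α) (R : Finset (Finset α)) : Finset (Finset α) :=
  (R.filter (fun B => (B ∩ s).Nonempty)).image (· ∩ s)

/-- propagating blocks. -/
def propag (s₁ s₂ : Finset α) (R : Finset (Finset α)) : Finset (Finset α) :=
  R.filter (fun B => (B ∩ s₁).Nonempty ∧ (B ∩ s₂).Nonempty)

def restrD (s₁ s₂ : Finset α) (R : Finset (Finset α)) : Finset (Finset α) :=
  (propag s₁ s₂ R).image (· ∩ s₁)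

def Mf (s₁ s₂ : Finset α) (R : Finset (Finset α)) : Finset (Finset α × Finset α) :=
  (propag s₁ s₂ R).image (fun B => (B ∩ s₁, B ∩ s₂))

def glue (P₁ D₁ P₂ D₂ : Finset (Finset α)) (M : Finset (Finset α × Finset α)) :
    Finset (Finset α) :=
  ((P₁ \ D₁) ∪ (P₂ \ D₂)) ∪ M.image (fun p => p.1 ∪ p.2)

lemma mem_glue {P₁ D₁ P₂ D₂ : Finset (Finset α)} {M : Finset (Finset α × Finset α)}
    {C : Finset α} : C ∈ glue P₁ D₁ P₂ D₂ M ↔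
      (C ∈ P₁ ∧ C ∉ D₁) ∨ (C ∈ P₂ ∧ C ∉ D₂) ∨ ∃ p ∈ M, p.1 ∪ p.2 = C := by
  simp [glue, Finset.mem_union, Finset.mem_sdiff, Finset.mem_image, or_assoc]

lemma restr_isPart {w : Finset α} {R : Finset (Finset α)} (h : IsPart w R)
    {s : Finset α} (hs : s ⊆ w) : IsPart s (restr s R) := by
  refine ⟨?_, ?_, ?_⟩
  · intro X hX
    rw [restr, Finset.mem_image] at hX
    obtain ⟨B, _, rfl⟩ := hX
    exact Finset.inter_subset_right
  · intro X hX
    rw [restr, Finset.mem_image] at hX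
    obtain ⟨B, hB, rfl⟩ := hX
    exact (Finset.mem_filter.mp hB).2
  · intro x hx
    obtain ⟨B, ⟨hBR, hxB⟩, -⟩ := h.2.2 x (hs hx)
    have hxBs : x ∈ B ∩ s := Finset.mem_inter.mpr ⟨hxB, hx⟩
    refine ⟨B ∩ s, ⟨?_, hxBs⟩, ?_⟩
    · rw [restr, Finset.mem_image]
      exact ⟨B, Finset.mem_filter.mpr ⟨hBR, ⟨x, hxBs⟩⟩, rfl⟩
    · rintro X ⟨hX, hxX⟩
      rw [restr, Finset.mem_image] at hX
      obtain ⟨C, hC, rfl⟩ := hX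
      have hCR := (Finset.mem_filter.mp hC).1
      have hxC : x ∈ C := (Finset.mem_inter.mp hxX).1
      rw [h.block_eq hCR hBR hxC hxB]

lemma restrD_subset {R : Finset (Finset α)} : restrD s₁ s₂ R ⊆ restr s₁ R := by
  intro X hX
  rw [restrD, Finset.mem_image] at hX
  obtain ⟨B, hB, rfl⟩ := hX
  rw [propag, Finset.mem_filter] at hB
  rw [restr, Finset.mem_image]
  exact ⟨B, Finset.mem_filter.mpr ⟨hB.1, hB.2.1⟩, rfl⟩

lemma propag_injOn {w : Finset α} {R : Finset (Finset α)} (h : IsPart w R) :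
    ∀ B ∈ propag s₁ s₂ R, ∀ C ∈ propag s₁ s₂ R, B ∩ s₁ = C ∩ s₁ → B = C := by
  intro B hB C hC hEq
  rw [propag, Finset.mem_filter] at hB hC
  obtain ⟨x, hx⟩ := hB.2.1
  have hxC : x ∈ C ∩ s₁ := hEq ▸ hx
  exact h.block_eq hB.1 hC.1 (Finset.mem_inter.mp hx).1 (Finset.mem_inter.mp hxC).1

lemma propag_injOn' {w : Finset α} {R : Finset (Finset α)} (h : IsPart w R) :
    ∀ B ∈ propag s₁ s₂ R, ∀ C ∈ propag s₁ s₂ R, B ∩ s₂ = C ∩ s₂ → B = C := by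
  intro B hB C hC hEq
  rw [propag, Finset.mem_filter] at hB hC
  obtain ⟨x, hx⟩ := hB.2.2
  have hxC : x ∈ C ∩ s₂ := hEq ▸ hx
  exact h.block_eq hB.1 hC.1 (Finset.mem_inter.mp hx).1 (Finset.mem_inter.mp hxC).1

lemma card_restrD {w : Finset α} {R : Finset (Finset α)} (h : IsPart w R) :
    (restrD s₁ s₂ R).card = (propag s₁ s₂ R).card :=
  Finset.card_image_of_injOn (propag_injOn h)

lemma restrD_symm_card {w : Finset α} {R : Finset (Finset α)} (h : IsPart w R) :
    ((propag s₁ s₂ R).image (· ∩ s₂)).card = (propag s₁ s₂ R).card :=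
  Finset.card_image_of_injOn (propag_injOn' h)

lemma Mf_isMatching {w : Finset α} {R : Finset (Finset α)} (h : IsPart w R) :
    IsMatching (restrD s₁ s₂ R) ((propag s₁ s₂ R).image (· ∩ s₂)) (Mf s₁ s₂ R) := by
  refine ⟨?_, ?_, ?_⟩
  · rintro p hp
    rw [Mf, Finset.mem_image] at hp
    obtain ⟨B, hB, rfl⟩ := hp
    exact ⟨Finset.mem_image_of_mem _ hB, Finset.mem_image_of_mem _ hB⟩
  · intro X hX
    rw [restrD, Finset.mem_image] at hX
    obtain ⟨B, hB, rfl⟩ := hX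
    refine ⟨(B ∩ s₁, B ∩ s₂), ⟨Finset.mem_image_of_mem _ hB, rfl⟩, ?_⟩
    rintro p ⟨hp, hp1⟩
    rw [Mf, Finset.mem_image] at hp
    obtain ⟨C, hC, rfl⟩ := hp
    simp only at hp1
    rw [propag_injOn h C hC B hB hp1]
  · intro Y hY
    rw [Finset.mem_image] at hY
    obtain ⟨B, hB, rfl⟩ := hY
    refine ⟨(B ∩ s₁, B ∩ s₂), ⟨Finset.mem_image_of_mem _ hB, rfl⟩, ?_⟩
    rintro p ⟨hp, hp2⟩
    rw [Mf, Finset.mem_image] at hp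
    obtain ⟨C, hC, rfl⟩ := hp
    simp only at hp2
    rw [propag_injOn' h C hC B hB hp2]

variable {P₁ D₁ P₂ D₂ : Finset (Finset α)} {M : Finset (Finset α × Finset α)}

lemma isPart_glue (hdisj : Disjoint s₁ s₂) (h₁ : IsPart s₁ P₁) (h₂ : IsPart s₂ P₂) (hD₁ : D₁ ⊆ P₁) (hD₂ : D₂ ⊆ P₂)
    (hM : IsMatching D₁ D₂ M) : IsPart (s₁ ∪ s₂) (glue P₁ D₁ P₂ D₂ M) := by
  have hMP : ∀ p ∈ M, p.1 ∈ P₁ ∧ p.2 ∈ P₂ := fun p hp =>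
    ⟨hD₁ (hM.1 p hp).1, hD₂ (hM.1 p hp).2⟩
  refine ⟨?_, ?_, ?_⟩
  · intro C hC
    rcases mem_glue.mp hC with ⟨hC', -⟩ | ⟨hC', -⟩ | ⟨p, hp, rfl⟩
    · exact (h₁.1 C hC').trans Finset.subset_union_left
    · exact (h₂.1 C hC').trans Finset.subset_union_right
    · exact Finset.union_subset
        ((h₁.1 _ (hMP p hp).1).trans Finset.subset_union_left)
        ((h₂.1 _ (hMP p hp).2).trans Finset.subset_union_right)
  · intro C hC
    rcases mem_glue.mp hC with ⟨hC', -⟩ | ⟨hC', -⟩ | ⟨p, hp, rfl⟩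
    · exact h₁.2.1 C hC'
    · exact h₂.2.1 C hC'
    · exact (h₁.2.1 _ (hMP p hp).1).mono Finset.subset_union_left
  · intro x hx
    rcases Finset.mem_union.mp hx with hx1 | hx2
    · -- x ∈ s₁
      have hx2 : x ∉ s₂ := Finset.disjoint_left.mp hdisj hx1
      obtain ⟨B, ⟨hBP, hxB⟩, hu⟩ := h₁.2.2 x hx1
      by_cases hBD : B ∈ D₁
      · obtain ⟨p, ⟨hpM, hp1⟩, hup⟩ := hM.2.1 B hBD
        refine ⟨p.1 ∪ p.2, ⟨mem_glue.mpr (Or.inr (Or.inr ⟨p, hpM, rfl⟩)),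
          Finset.mem_union_left _ (hp1 ▸ hxB)⟩, ?_⟩
        rintro E ⟨hE, hxE⟩
        rcases mem_glue.mp hE with ⟨hE', hED⟩ | ⟨hE', -⟩ | ⟨q, hq, rfl⟩
        · exact absurd (h₁.block_eq hE' hBP hxE hxB ▸ hBD) hED
        · exact absurd (h₂.1 E hE' hxE) hx2
        · have hxq1 : x ∈ q.1 := by
            rcases Finset.mem_union.mp hxE with h' | h'
            · exact h'
            · exact absurd (h₂.1 _ (hMP q hq).2 h') hx2
          have : q.1 = B := h₁.block_eq (hMP q hq).1 hBP hxq1 hxB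
          rw [hup q ⟨hq, this⟩]
      · refine ⟨B, ⟨mem_glue.mpr (Or.inl ⟨hBP, hBD⟩), hxB⟩, ?_⟩
        rintro E ⟨hE, hxE⟩
        rcases mem_glue.mp hE with ⟨hE', -⟩ | ⟨hE', -⟩ | ⟨q, hq, rfl⟩
        · exact h₁.block_eq hE' hBP hxE hxB
        · exact absurd (h₂.1 E hE' hxE) hx2
        · exfalso
          have hxq1 : x ∈ q.1 := by
            rcases Finset.mem_union.mp hxE with h' | h'
            · exact h'
            · exact absurd (h₂.1 _ (hMP q hq).2 h') hx2
          exact hBD (h₁.block_eq (hMP q hq).1 hBP hxq1 hxB ▸ (hM.1 q hq).1)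
    · -- x ∈ s₂
      have hx1 : x ∉ s₁ := Finset.disjoint_right.mp hdisj hx2
      obtain ⟨B, ⟨hBP, hxB⟩, hu⟩ := h₂.2.2 x hx2
      by_cases hBD : B ∈ D₂
      · obtain ⟨p, ⟨hpM, hp2⟩, hup⟩ := hM.2.2 B hBD
        refine ⟨p.1 ∪ p.2, ⟨mem_glue.mpr (Or.inr (Or.inr ⟨p, hpM, rfl⟩)),
          Finset.mem_union_right _ (hp2 ▸ hxB)⟩, ?_⟩
        rintro E ⟨hE, hxE⟩
        rcases mem_glue.mp hE with ⟨hE', -⟩ | ⟨hE', hED⟩ | ⟨q, hq, rfl⟩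
        · exact absurd (h₁.1 E hE' hxE) hx1
        · exact absurd (h₂.block_eq hE' hBP hxE hxB ▸ hBD) hED
        · have hxq2 : x ∈ q.2 := by
            rcases Finset.mem_union.mp hxE with h' | h'
            · exact absurd (h₁.1 _ (hMP q hq).1 h') hx1
            · exact h'
          have : q.2 = B := h₂.block_eq (hMP q hq).2 hBP hxq2 hxB
          rw [hup q ⟨hq, this⟩]
      · refine ⟨B, ⟨mem_glue.mpr (Or.inr (Or.inl ⟨hBP, hBD⟩)), hxB⟩, ?_⟩
        rintro E ⟨hE, hxE⟩
        rcases mem_glue.mp hE with ⟨hE', -⟩ | ⟨hE', -⟩ | ⟨q, hq, rfl⟩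
        · exact absurd (h₁.1 E hE' hxE) hx1
        · exact h₂.block_eq hE' hBP hxE hxB
        · exfalso
          have hxq2 : x ∈ q.2 := by
            rcases Finset.mem_union.mp hxE with h' | h'
            · exact absurd (h₁.1 _ (hMP q hq).1 h') hx1
            · exact h'
          exact hBD (h₂.block_eq (hMP q hq).2 hBP hxq2 hxB ▸ (hM.1 q hq).2)

lemma mem_restr {s : Finset α} {R : Finset (Finset α)} {X : Finset α} :
    X ∈ restr s R ↔ ∃ B, B ∈ R ∧ (B ∩ s).Nonempty ∧ B ∩ s = X := by
  simp [restr, Finset.mem_image, Finset.mem_filter, and_assoc]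

lemma mem_propag {R : Finset (Finset α)} {B : Finset α} :
    B ∈ propag s₁ s₂ R ↔ B ∈ R ∧ (B ∩ s₁).Nonempty ∧ (B ∩ s₂).Nonempty := by
  simp [propag, Finset.mem_filter, and_assoc]

lemma mem_Mf {R : Finset (Finset α)} {p : Finset α × Finset α} :
    p ∈ Mf s₁ s₂ R ↔ ∃ B ∈ propag s₁ s₂ R, (B ∩ s₁, B ∩ s₂) = p := by
  simp [Mf, Finset.mem_image]

lemma union_inter₁ (hdisj : Disjoint s₁ s₂) {X Y : Finset α} (hX : X ⊆ s₁) (hY : Y ⊆ s₂) :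
    (X ∪ Y) ∩ s₁ = X := by
  rw [Finset.union_inter_distrib_right, Finset.inter_eq_left.mpr hX,
    Finset.disjoint_iff_inter_eq_empty.mp (hdisj.symm.mono_left hY), Finset.union_empty]

lemma union_inter₂ (hdisj : Disjoint s₁ s₂) {X Y : Finset α} (hX : X ⊆ s₁) (hY : Y ⊆ s₂) :
    (X ∪ Y) ∩ s₂ = Y := by
  rw [Finset.union_inter_distrib_right, Finset.inter_eq_left.mpr hY,
    Finset.disjoint_iff_inter_eq_empty.mp (hdisj.mono_left hX), Finset.empty_union]

lemma IsMatching.image_fst {β γ : Type*} [DecidableEq β] [DecidableEq γ]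
    {u : Finset β} {v : Finset γ} {M : Finset (β × γ)} (hM : IsMatching u v M) :
    M.image Prod.fst = u := by
  apply Finset.Subset.antisymm
  · intro x hx
    rw [Finset.mem_image] at hx
    obtain ⟨p, hp, rfl⟩ := hx
    exact (hM.1 p hp).1
  · intro x hx
    obtain ⟨p, ⟨hpM, hp1⟩, -⟩ := hM.2.1 x hx
    rw [Finset.mem_image]
    exact ⟨p, hpM, hp1⟩

lemma IsMatching.image_snd {β γ : Type*} [DecidableEq β] [DecidableEq γ]
    {u : Finset β} {v : Finset γ} {M : Finset (β × γ)} (hM : IsMatching u v M) :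
    M.image Prod.snd = v := by
  apply Finset.Subset.antisymm
  · intro y hy
    rw [Finset.mem_image] at hy
    obtain ⟨p, hp, rfl⟩ := hy
    exact (hM.1 p hp).2
  · intro y hy
    obtain ⟨p, ⟨hpM, hp2⟩, -⟩ := hM.2.2 y hy
    rw [Finset.mem_image]
    exact ⟨p, hpM, hp2⟩

section Glue
variable (hdisj : Disjoint s₁ s₂) (h₁ : IsPart s₁ P₁) (h₂ : IsPart s₂ P₂)
  (hD₁ : D₁ ⊆ P₁) (hD₂ : D₂ ⊆ P₂) (hM : IsMatching D₁ D₂ M)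
include hdisj h₁ h₂ hD₁ hD₂ hM

lemma glue_facts : ∀ p ∈ M, p.1 ⊆ s₁ ∧ p.2 ⊆ s₂ ∧ p.1.Nonempty ∧ p.2.Nonempty := by
  intro p hp
  have h1 := hD₁ (hM.1 p hp).1
  have h2 := hD₂ (hM.1 p hp).2
  exact ⟨h₁.1 _ h1, h₂.1 _ h2, h₁.2.1 _ h1, h₂.2.1 _ h2⟩

lemma glue_restr₁ : restr s₁ (glue P₁ D₁ P₂ D₂ M) = P₁ := by
  ext X
  rw [mem_restr]
  constructor
  · rintro ⟨C, hC, hne, rfl⟩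
    rcases mem_glue.mp hC with ⟨hC', -⟩ | ⟨hC', -⟩ | ⟨p, hp, rfl⟩
    · rw [Finset.inter_eq_left.mpr (h₁.1 C hC')]
      exact hC'
    · exfalso
      rw [Finset.disjoint_iff_inter_eq_empty.mp (hdisj.symm.mono_left (h₂.1 C hC'))] at hne
      exact Finset.not_nonempty_empty hne
    · obtain ⟨hp1, hp2, -, -⟩ := glue_facts hdisj h₁ h₂ hD₁ hD₂ hM p hp
      rw [union_inter₁ hdisj hp1 hp2]
      exact hD₁ (hM.1 p hp).1
  · intro hX
    by_cases hXD : X ∈ D₁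
    · obtain ⟨p, ⟨hpM, hp1⟩, -⟩ := hM.2.1 X hXD
      obtain ⟨hps1, hps2, -, -⟩ := glue_facts hdisj h₁ h₂ hD₁ hD₂ hM p hpM
      refine ⟨p.1 ∪ p.2, mem_glue.mpr (Or.inr (Or.inr ⟨p, hpM, rfl⟩)), ?_, ?_⟩
      · rw [union_inter₁ hdisj hps1 hps2, hp1]
        exact h₁.2.1 X hX
      · rw [union_inter₁ hdisj hps1 hps2, hp1]
    · refine ⟨X, mem_glue.mpr (Or.inl ⟨hX, hXD⟩), ?_, ?_⟩
      · rw [Finset.inter_eq_left.mpr (h₁.1 X hX)]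
        exact h₁.2.1 X hX
      · exact Finset.inter_eq_left.mpr (h₁.1 X hX)

lemma glue_restr₂ : restr s₂ (glue P₁ D₁ P₂ D₂ M) = P₂ := by
  ext X
  rw [mem_restr]
  constructor
  · rintro ⟨C, hC, hne, rfl⟩
    rcases mem_glue.mp hC with ⟨hC', -⟩ | ⟨hC', -⟩ | ⟨p, hp, rfl⟩
    · exfalso
      rw [Finset.disjoint_iff_inter_eq_empty.mp (hdisj.mono_left (h₁.1 C hC'))] at hne
      exact Finset.not_nonempty_empty hne
    · rw [Finset.inter_eq_left.mpr (h₂.1 C hC')]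
      exact hC'
    · obtain ⟨hp1, hp2, -, -⟩ := glue_facts hdisj h₁ h₂ hD₁ hD₂ hM p hp
      rw [union_inter₂ hdisj hp1 hp2]
      exact hD₂ (hM.1 p hp).2
  · intro hX
    by_cases hXD : X ∈ D₂
    · obtain ⟨p, ⟨hpM, hp2⟩, -⟩ := hM.2.2 X hXD
      obtain ⟨hps1, hps2, -, -⟩ := glue_facts hdisj h₁ h₂ hD₁ hD₂ hM p hpM
      refine ⟨p.1 ∪ p.2, mem_glue.mpr (Or.inr (Or.inr ⟨p, hpM, rfl⟩)), ?_, ?_⟩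
      · rw [union_inter₂ hdisj hps1 hps2, hp2]
        exact h₂.2.1 X hX
      · rw [union_inter₂ hdisj hps1 hps2, hp2]
    · refine ⟨X, mem_glue.mpr (Or.inr (Or.inl ⟨hX, hXD⟩)), ?_, ?_⟩
      · rw [Finset.inter_eq_left.mpr (h₂.1 X hX)]
        exact h₂.2.1 X hX
      · exact Finset.inter_eq_left.mpr (h₂.1 X hX)

lemma glue_propag : propag s₁ s₂ (glue P₁ D₁ P₂ D₂ M)
    = M.image (fun p => p.1 ∪ p.2) := by
  ext C
  rw [mem_propag]
  constructor
  · rintro ⟨hC, hne1, hne2⟩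
    rcases mem_glue.mp hC with ⟨hC', -⟩ | ⟨hC', -⟩ | ⟨p, hp, rfl⟩
    · exfalso
      rw [Finset.disjoint_iff_inter_eq_empty.mp (hdisj.mono_left (h₁.1 C hC'))] at hne2
      exact Finset.not_nonempty_empty hne2
    · exfalso
      rw [Finset.disjoint_iff_inter_eq_empty.mp (hdisj.symm.mono_left (h₂.1 C hC'))] at hne1
      exact Finset.not_nonempty_empty hne1
    · exact Finset.mem_image_of_mem _ hp
  · intro hC
    rw [Finset.mem_image] at hC
    obtain ⟨p, hp, rfl⟩ := hC
    obtain ⟨hps1, hps2, hne1, hne2⟩ := glue_facts hdisj h₁ h₂ hD₁ hD₂ hM p hp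
    refine ⟨mem_glue.mpr (Or.inr (Or.inr ⟨p, hp, rfl⟩)), ?_, ?_⟩
    · rw [union_inter₁ hdisj hps1 hps2]
      exact hne1
    · rw [union_inter₂ hdisj hps1 hps2]
      exact hne2

lemma glue_Mf : Mf s₁ s₂ (glue P₁ D₁ P₂ D₂ M) = M := by
  rw [Mf, glue_propag hdisj h₁ h₂ hD₁ hD₂ hM, Finset.image_image]
  rw [show ((fun B => (B ∩ s₁, B ∩ s₂)) ∘ (fun (p : Finset α × Finset α) => p.1 ∪ p.2))
    = fun p => ((p.1 ∪ p.2) ∩ s₁, (p.1 ∪ p.2) ∩ s₂) from rfl]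
  apply Finset.image_congr ?_ |>.trans Finset.image_id
  intro p hp
  obtain ⟨hps1, hps2, -, -⟩ := glue_facts hdisj h₁ h₂ hD₁ hD₂ hM p hp
  show ((p.1 ∪ p.2) ∩ s₁, (p.1 ∪ p.2) ∩ s₂) = p
  rw [union_inter₁ hdisj hps1 hps2, union_inter₂ hdisj hps1 hps2]

lemma glue_restrD₁ : restrD s₁ s₂ (glue P₁ D₁ P₂ D₂ M) = D₁ := by
  rw [restrD, glue_propag hdisj h₁ h₂ hD₁ hD₂ hM, Finset.image_image]
  rw [show ((· ∩ s₁) ∘ (fun (p : Finset α × Finset α) => p.1 ∪ p.2))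
    = fun p => (p.1 ∪ p.2) ∩ s₁ from rfl]
  rw [← hM.image_fst]
  apply Finset.image_congr
  intro p hp
  obtain ⟨hps1, hps2, -, -⟩ := glue_facts hdisj h₁ h₂ hD₁ hD₂ hM p hp
  exact union_inter₁ hdisj hps1 hps2

lemma glue_restrD₂ : (propag s₁ s₂ (glue P₁ D₁ P₂ D₂ M)).image (· ∩ s₂) = D₂ := by
  rw [glue_propag hdisj h₁ h₂ hD₁ hD₂ hM, Finset.image_image]
  rw [show ((· ∩ s₂) ∘ (fun (p : Finset α × Finset α) => p.1 ∪ p.2))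
    = fun p => (p.1 ∪ p.2) ∩ s₂ from rfl]
  rw [← hM.image_snd]
  apply Finset.image_congr
  intro p hp
  obtain ⟨hps1, hps2, -, -⟩ := glue_facts hdisj h₁ h₂ hD₁ hD₂ hM p hp
  exact union_inter₂ hdisj hps1 hps2

end Glue

lemma subset_left_of_inter_empty {B : Finset α} (hB : B ⊆ s₁ ∪ s₂)
    (h2 : ¬(B ∩ s₂).Nonempty) : B ⊆ s₁ := by
  intro x hx
  rcases Finset.mem_union.mp (hB hx) with h' | h'
  · exact h'
  · exact absurd ⟨x, Finset.mem_inter.mpr ⟨hx, h'⟩⟩ h2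

lemma subset_right_of_inter_empty {B : Finset α} (hB : B ⊆ s₁ ∪ s₂)
    (h1 : ¬(B ∩ s₁).Nonempty) : B ⊆ s₂ := by
  intro x hx
  rcases Finset.mem_union.mp (hB hx) with h' | h'
  · exact absurd ⟨x, Finset.mem_inter.mpr ⟨hx, h'⟩⟩ h1
  · exact h'

lemma glue_restr_eq {R : Finset (Finset α)} (h : IsPart (s₁ ∪ s₂) R) :
    glue (restr s₁ R) (restrD s₁ s₂ R) (restr s₂ R)
      ((propag s₁ s₂ R).image (· ∩ s₂)) (Mf s₁ s₂ R) = R := by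
  ext C
  rw [mem_glue]
  constructor
  · rintro (⟨hC, hCD⟩ | ⟨hC, hCD⟩ | ⟨p, hp, rfl⟩)
    · obtain ⟨B, hBR, hne, rfl⟩ := mem_restr.mp hC
      have hb2 : ¬(B ∩ s₂).Nonempty := by
        intro hb2
        exact hCD (Finset.mem_image_of_mem _ (mem_propag.mpr ⟨hBR, hne, hb2⟩))
      rw [Finset.inter_eq_left.mpr (subset_left_of_inter_empty (h.1 B hBR) hb2)]
      exact hBR
    · obtain ⟨B, hBR, hne, rfl⟩ := mem_restr.mp hC
      have hb1 : ¬(B ∩ s₁).Nonempty := by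
        intro hb1
        exact hCD (Finset.mem_image_of_mem _ (mem_propag.mpr ⟨hBR, hb1, hne⟩))
      rw [Finset.inter_eq_left.mpr (subset_right_of_inter_empty (h.1 B hBR) hb1)]
      exact hBR
    · obtain ⟨B, hB, rfl⟩ := mem_Mf.mp hp
      have hBR := (mem_propag.mp hB).1
      have hU : B ∩ s₁ ∪ B ∩ s₂ = B := by
        rw [← Finset.inter_union_distrib_left, Finset.inter_eq_left.mpr (h.1 B hBR)]
      show B ∩ s₁ ∪ B ∩ s₂ ∈ R
      rw [hU]
      exact hBR
  · intro hCR
    by_cases hb1 : (C ∩ s₁).Nonempty <;> by_cases hb2 : (C ∩ s₂).Nonempty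
    · refine Or.inr (Or.inr ⟨(C ∩ s₁, C ∩ s₂), mem_Mf.mpr
        ⟨C, mem_propag.mpr ⟨hCR, hb1, hb2⟩, rfl⟩, ?_⟩)
      show C ∩ s₁ ∪ C ∩ s₂ = C
      rw [← Finset.inter_union_distrib_left, Finset.inter_eq_left.mpr (h.1 C hCR)]
    · refine Or.inl ⟨?_, ?_⟩
      · rw [mem_restr]
        exact ⟨C, hCR, hb1, Finset.inter_eq_left.mpr
          (subset_left_of_inter_empty (h.1 C hCR) hb2)⟩
      · intro hmem
        rw [restrD, Finset.mem_image] at hmem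
        obtain ⟨B, hB, hBC⟩ := hmem
        obtain ⟨hBR, hB1, hB2⟩ := mem_propag.mp hB
        obtain ⟨x, hx⟩ := hB1
        have hxC : x ∈ C := hBC ▸ hx
        have : B = C := h.block_eq hBR hCR (Finset.mem_inter.mp hx).1 hxC
        exact hb2 (this ▸ hB2)
    · refine Or.inr (Or.inl ⟨?_, ?_⟩)
      · rw [mem_restr]
        exact ⟨C, hCR, hb2, Finset.inter_eq_left.mpr
          (subset_right_of_inter_empty (h.1 C hCR) hb1)⟩
      · intro hmem
        rw [Finset.mem_image] at hmem
        obtain ⟨B, hB, hBC⟩ := hmem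
        obtain ⟨hBR, hB1, hB2⟩ := mem_propag.mp hB
        obtain ⟨x, hx⟩ := hB2
        have hxC : x ∈ C := hBC ▸ hx
        have : B = C := h.block_eq hBR hCR (Finset.mem_inter.mp hx).1 hxC
        exact hb1 (this ▸ hB1)
    · exfalso
      obtain ⟨x, hx⟩ := h.2.1 C hCR
      rcases Finset.mem_union.mp (h.1 C hCR hx) with h' | h'
      · exact hb1 ⟨x, Finset.mem_inter.mpr ⟨hx, h'⟩⟩
      · exact hb2 ⟨x, Finset.mem_inter.mpr ⟨hx, h'⟩⟩

theorem card_parts_union (hdisj : Disjoint s₁ s₂) :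
    (parts (s₁ ∪ s₂)).card
      = ∑ m ∈ Finset.range (s₁.card + 1),
          ((marked s₁).filter (fun q => q.2.card = m)).card *
          ((marked s₂).filter (fun q => q.2.card = m)).card * m.factorial := by
  classical
  set Φ : Finset (Finset α) →
      (Finset (Finset α) × Finset (Finset α)) × (Finset (Finset α) × Finset (Finset α)) :=
    fun R => ((restr s₁ R, restrD s₁ s₂ R),
      (restr s₂ R, (propag s₁ s₂ R).image (· ∩ s₂))) with hΦdef
  set T := ((marked s₁) ×ˢ (marked s₂)).filter
    (fun q => q.1.2.card = q.2.2.card) with hT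
  have hmaps : ∀ R ∈ parts (s₁ ∪ s₂), Φ R ∈ T := by
    intro R hR
    have h := mem_parts.mp hR
    rw [hT, Finset.mem_filter, Finset.mem_product, mem_marked, mem_marked]
    refine ⟨⟨⟨restr_isPart h Finset.subset_union_left, restrD_subset⟩,
      ⟨restr_isPart h Finset.subset_union_right, ?_⟩⟩, ?_⟩
    · intro X hX
      rw [Finset.mem_image] at hX
      obtain ⟨B, hB, rfl⟩ := hX
      obtain ⟨hBR, hB1, hB2⟩ := mem_propag.mp hB
      rw [mem_restr]
      exact ⟨B, hBR, hB2, rfl⟩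
    · show (restrD s₁ s₂ R).card = ((propag s₁ s₂ R).image (· ∩ s₂)).card
      rw [card_restrD h, restrD_symm_card h]
  rw [Finset.card_eq_sum_card_fiberwise hmaps]
  have hfiber : ∀ q ∈ T,
      ((parts (s₁ ∪ s₂)).filter (fun R => Φ R = q)).card = q.1.2.card.factorial := by
    rintro ⟨⟨P₁, D₁⟩, ⟨P₂, D₂⟩⟩ hq
    rw [hT, Finset.mem_filter, Finset.mem_product, mem_marked, mem_marked] at hq
    obtain ⟨⟨⟨h₁, hD₁⟩, h₂, hD₂⟩, hDcard⟩ := hq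
    simp only at h₁ h₂ hD₁ hD₂ hDcard ⊢
    have key : ((parts (s₁ ∪ s₂)).filter (fun R => Φ R = ((P₁, D₁), (P₂, D₂)))).card
        = (matchings D₁ D₂).card := by
      refine Finset.card_bij' (fun R _ => Mf s₁ s₂ R)
        (fun M _ => glue P₁ D₁ P₂ D₂ M) ?_ ?_ ?_ ?_
      · intro R hR
        rw [Finset.mem_filter] at hR
        obtain ⟨hRp, hRq⟩ := hR
        have h := mem_parts.mp hRp
        have e1 : restr s₁ R = P₁ := congrArg (fun z => z.1.1) hRq
        have e2 : restrD s₁ s₂ R = D₁ := congrArg (fun z => z.1.2) hRq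
        have e3 : (propag s₁ s₂ R).image (· ∩ s₂) = D₂ := congrArg (fun z => z.2.2) hRq
        show Mf s₁ s₂ R ∈ matchings D₁ D₂
        rw [mem_matchings, ← e2, ← e3]
        exact Mf_isMatching h
      · intro M hM
        rw [mem_matchings] at hM
        rw [Finset.mem_filter, mem_parts]
        refine ⟨isPart_glue hdisj h₁ h₂ hD₁ hD₂ hM, ?_⟩
        show ((restr s₁ _, restrD s₁ s₂ _), (restr s₂ _, _)) = ((P₁, D₁), (P₂, D₂))
        rw [glue_restr₁ hdisj h₁ h₂ hD₁ hD₂ hM, glue_restr₂ hdisj h₁ h₂ hD₁ hD₂ hM,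
          glue_restrD₁ hdisj h₁ h₂ hD₁ hD₂ hM, glue_restrD₂ hdisj h₁ h₂ hD₁ hD₂ hM]
      · intro R hR
        rw [Finset.mem_filter] at hR
        obtain ⟨hRp, hRq⟩ := hR
        have h := mem_parts.mp hRp
        have e1 : restr s₁ R = P₁ := congrArg (fun z => z.1.1) hRq
        have e2 : restrD s₁ s₂ R = D₁ := congrArg (fun z => z.1.2) hRq
        have e3 : restr s₂ R = P₂ := congrArg (fun z => z.2.1) hRq
        have e4 : (propag s₁ s₂ R).image (· ∩ s₂) = D₂ := congrArg (fun z => z.2.2) hRq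
        show glue P₁ D₁ P₂ D₂ (Mf s₁ s₂ R) = R
        rw [← e1, ← e2, ← e3, ← e4]
        exact glue_restr_eq h
      · intro M hM
        rw [mem_matchings] at hM
        show Mf s₁ s₂ (glue P₁ D₁ P₂ D₂ M) = M
        exact glue_Mf hdisj h₁ h₂ hD₁ hD₂ hM
    rw [key, card_matchings D₁ D₂ hDcard]
  rw [Finset.sum_congr rfl hfiber]
  have hmaps2 : ∀ q ∈ T, q.1.2.card ∈ Finset.range (s₁.card + 1) := by
    intro q hq
    rw [hT, Finset.mem_filter, Finset.mem_product, mem_marked] at hq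
    rw [Finset.mem_range, Nat.lt_succ_iff]
    exact le_trans (Finset.card_le_card hq.1.1.2) hq.1.1.1.card_le
  rw [← Finset.sum_fiberwise_of_maps_to hmaps2]
  apply Finset.sum_congr rfl
  intro m _
  have hsplit : T.filter (fun q => q.1.2.card = m)
      = ((marked s₁).filter (fun q => q.2.card = m)) ×ˢ
        ((marked s₂).filter (fun q => q.2.card = m)) := by
    ext q
    rw [Finset.mem_filter, hT, Finset.mem_filter, Finset.mem_product,
      Finset.mem_product, Finset.mem_filter, Finset.mem_filter]
    constructor
    · rintro ⟨⟨⟨hq1, hq2⟩, hc⟩, hm⟩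
      exact ⟨⟨hq1, hm⟩, hq2, hc ▸ hm⟩
    · rintro ⟨⟨hq1, hm1⟩, hq2, hm2⟩
      exact ⟨⟨⟨hq1, hq2⟩, hm1.trans hm2.symm⟩, hm1⟩
  have hconst : ∀ q ∈ T.filter (fun q => q.1.2.card = m),
      q.1.2.card.factorial = m.factorial := by
    intro q hq
    rw [(Finset.mem_filter.mp hq).2]
  rw [Finset.sum_congr rfl hconst, Finset.sum_const, hsplit, Finset.card_product,
    smul_eq_mul]

end Main

end General


/-- `∑_{m=0}^k (∑_t S(k,t) C(t,m))² ⬝ m! = B(2k)`, the number of set partitions of a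
`2k`-element set (the dimension of the partition algebra `P_k(n)`). -/
theorem partition_algebra_dimension (k : ℕ) :
    ∑ m ∈ Finset.range (k + 1),
        (∑ t ∈ Finset.range (k + 1), stirling2 k t * t.choose m) ^ 2 * m.factorial =
      Nat.card {P : Finset (Finset (Fin (2 * k))) // IsSetPartition P} := by
  classical
  have hk : k ≤ 2 * k := by omega
  set s₁ : Finset (Fin (2 * k)) :=
    (Finset.univ : Finset (Fin k)).map (Fin.castLEEmb hk) with hs₁
  have hcard₁ : s₁.card = k := by
    rw [hs₁, Finset.card_map, Finset.card_univ, Fintype.card_fin]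
  have hcard₂ : s₁ᶜ.card = k := by
    rw [Finset.card_compl, hcard₁, Fintype.card_fin]
    omega
  have hparts : parts ((Finset.univ : Finset (Fin (2 * k)))) =
      Finset.univ.filter (fun P => IsSetPartition P) := by
    ext P
    rw [mem_parts, Finset.mem_filter]
    constructor
    · rintro ⟨-, h2, h3⟩
      exact ⟨Finset.mem_univ P, h2, fun x => h3 x (Finset.mem_univ x)⟩
    · rintro ⟨-, h2, h3⟩
      exact ⟨fun B _ => Finset.subset_univ B, h2, fun x _ => h3 x⟩
  have hrhs : Nat.card {P : Finset (Finset (Fin (2 * k))) // IsSetPartition P}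
      = (parts ((Finset.univ : Finset (Fin (2 * k))))).card := by
    rw [Nat.card_eq_fintype_card, Fintype.card_subtype, hparts]
  rw [hrhs, ← Finset.union_compl s₁, card_parts_union disjoint_compl_right]
  rw [hcard₁]
  apply Finset.sum_congr rfl
  intro m _
  rw [card_marked s₁ m, card_marked s₁ᶜ m, hcard₁, hcard₂, sq, Nat.mul_assoc]
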